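/- Let ρ♭: Gal(ℂ/ℝ) → GO_{2n+1}(Q̄_ℓ) be a continuous homomorphism and let ρ♯ be its composition with the standard embedding GO_{2n+1} ⊂ GL_{2n+1}. If the trace of ρ♯(c) is ±1, where c is complex conjugation, then ρ♭ is odd, i.e. the trace of Ad(ρ♭(c)) acting on the Lie algebra so_{2n+1} equals −n = −rank(so_{2n+1}). -/

import Mathlib

open Matrix

/-- The antidiagonal matrix `J` of size `2n+1` with ones on the antidiagonal (0-indexed),
realizing the symmetric bilinear form defining `GO_{2n+1}`. -/
def antidiagJ (K : Type*) [Field K] (n : ℕ) :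
    Matrix (Fin (2 * n + 1)) (Fin (2 * n + 1)) K :=
  fun i j => if (i : ℕ) + (j : ℕ) = 2 * n then 1 else 0

/-- The linear map `A ↦ A + J Aᵀ J`, whose kernel is the Lie algebra of `SO_{2n+1}`. -/
noncomputable def soDefMap (K : Type*) [Field K] (n : ℕ) :
    Matrix (Fin (2 * n + 1)) (Fin (2 * n + 1)) K →ₗ[K]
      Matrix (Fin (2 * n + 1)) (Fin (2 * n + 1)) K :=
  LinearMap.id +
    (LinearMap.mulLeft K (antidiagJ K n)).comp
      ((LinearMap.mulRight K (antidiagJ K n)).comp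
        (Matrix.transposeLinearEquiv (Fin (2 * n + 1)) (Fin (2 * n + 1)) K K).toLinearMap)

/-- The Lie algebra `so_{2n+1}`: matrices `A` with `A + J Aᵀ J⁻¹ = 0` (note `J⁻¹ = J`). -/
noncomputable def soLie (K : Type*) [Field K] (n : ℕ) :
    Submodule K (Matrix (Fin (2 * n + 1)) (Fin (2 * n + 1)) K) :=
  LinearMap.ker (soDefMap K n)

/-
The similitude factor of `g` is `1` because `tr g ≠ 0`, so `gᵀ = J g J`. Conjugation by such a `g`
commutes with the involution `τ : X ↦ J Xᵀ J`, whose `-1`-eigenspace is `so_{2n+1}`; hence `Ad(g)`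
is the restriction of `X ↦ g X g` composed with the projection `(1 - τ)/2`, which maps the full
matrix algebra onto `so_{2n+1}`. Computing traces on the full matrix algebra gives
`tr Ad(g) = ((tr g)² - tr g²)/2`, the character of `Λ²` of the standard representation, which for
an involution with `tr g = ±1` is `(1 - (2n+1))/2 = -n`.
-/

section MatrixTrace

variable {R m : Type*} [CommRing R] [Fintype m] [DecidableEq m]

theorem Matrix.mul_single_one_mul_apply (B C : Matrix m m R) (a b i j : m) :
    (B * (single a b (1 : R) * C)) i j = B i a * C b j := by
  rw [mul_apply, Finset.sum_eq_single a]
  · rw [single_mul_apply_same, one_mul]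
  · intro k _ hk
    rw [single_mul_apply_of_ne 1 a b k j hk, mul_zero]
  · simp

open LinearMap

theorem LinearMap.trace_eq_sum_single_apply (f : Matrix m m R →ₗ[R] Matrix m m R) :
    trace R _ f = ∑ p : m × m, f (Matrix.single p.1 p.2 1) p.1 p.2 := by
  rw [trace_eq_matrix_trace R (Matrix.stdBasis R m m), Matrix.trace]
  refine Finset.sum_congr rfl fun ⟨i, j⟩ _ => ?_
  rw [diag_apply, toMatrix_apply, stdBasis_eq_single]
  simp [Matrix.stdBasis, Pi.basis_repr]

theorem LinearMap.trace_mulLeft_comp_mulRight (B C : Matrix m m R) :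
    trace R _ (mulLeft R B ∘ₗ mulRight R C) = B.trace * C.trace := by
  simp only [trace_eq_sum_single_apply, comp_apply, mulLeft_apply, mulRight_apply,
    mul_single_one_mul_apply, Fintype.sum_prod_type, Matrix.trace, diag_apply, Finset.sum_mul_sum]

theorem LinearMap.trace_mulLeft_comp_mulRight_comp_transpose (B C : Matrix m m R) :
    trace R _ (mulLeft R B ∘ₗ mulRight R C ∘ₗ (transposeLinearEquiv m m R R).toLinearMap) =
      (B * Cᵀ).trace := by
  have hdiag (p : m × m) : (mulLeft R B ∘ₗ mulRight R C ∘ₗ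
      (transposeLinearEquiv m m R R).toLinearMap) (Matrix.single p.1 p.2 1) p.1 p.2 =
        B p.1 p.2 * C p.1 p.2 := by
    change (B * ((Matrix.single p.1 p.2 (1 : R))ᵀ * C)) p.1 p.2 = _
    rw [transpose_single, mul_single_one_mul_apply]
  simp only [trace_eq_sum_single_apply, hdiag, Fintype.sum_prod_type, Matrix.trace, diag_apply,
    mul_apply, transpose_apply]

end MatrixTrace

theorem Matrix.transpose_eq_conj_of_similitude {K m : Type*} [Field K] [Fintype m]
    [DecidableEq m] {g J : Matrix m m K} {μ : K} (hg2 : g * g = 1) (hJ2 : J * J = 1)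
    (hGO : gᵀ * J * g = μ • J) (htr : g.trace ≠ 0) : gᵀ = J * g * J := by
  have hgt : gᵀ = μ • (J * g * J) := by
    calc gᵀ = gᵀ * J * g * g * J := by
          rw [Matrix.mul_assoc _ g g, hg2, Matrix.mul_one, Matrix.mul_assoc, hJ2, Matrix.mul_one]
      _ = μ • (J * g * J) := by rw [hGO, Matrix.smul_mul, Matrix.smul_mul]
  have hμ : μ = 1 := by
    have h := congrArg Matrix.trace hgt
    rw [trace_transpose, trace_smul, trace_mul_cycle, hJ2, Matrix.one_mul, smul_eq_mul] at h
    exact (mul_eq_right₀ htr).mp h.symm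
  rwa [hμ, one_smul] at hgt

section SoLie

variable {K : Type*} [Field K] {n : ℕ}

theorem antidiagJ_apply (i j : Fin (2 * n + 1)) :
    antidiagJ K n i j = if j = i.rev then 1 else 0 := by
  have : (i : ℕ) + j = 2 * n ↔ j = i.rev := by
    rw [Fin.ext_iff, Fin.val_rev]
    omega
  simp [antidiagJ, this]

theorem antidiagJ_mul_self : antidiagJ K n * antidiagJ K n = 1 := by
  ext i j
  rw [mul_apply, Finset.sum_eq_single i.rev]
  · simp [antidiagJ_apply, one_apply, eq_comm]
  · intro k _ hk
    rw [antidiagJ_apply, if_neg hk, zero_mul]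
  · simp

theorem antidiagJ_transpose : (antidiagJ K n)ᵀ = antidiagJ K n := by
  ext i j
  simp only [transpose_apply, antidiagJ, Nat.add_comm]

variable (K n) in
noncomputable def soInvolution :
    Matrix (Fin (2 * n + 1)) (Fin (2 * n + 1)) K →ₗ[K]
      Matrix (Fin (2 * n + 1)) (Fin (2 * n + 1)) K :=
  LinearMap.mulLeft K (antidiagJ K n) ∘ₗ LinearMap.mulRight K (antidiagJ K n) ∘ₗ
    (transposeLinearEquiv (Fin (2 * n + 1)) (Fin (2 * n + 1)) K K).toLinearMap

theorem soInvolution_apply (X : Matrix (Fin (2 * n + 1)) (Fin (2 * n + 1)) K) :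
    soInvolution K n X = antidiagJ K n * (Xᵀ * antidiagJ K n) := rfl

theorem soInvolution_soInvolution (X : Matrix (Fin (2 * n + 1)) (Fin (2 * n + 1)) K) :
    soInvolution K n (soInvolution K n X) = X := by
  simp only [soInvolution_apply, transpose_mul, transpose_transpose, antidiagJ_transpose,
    ← Matrix.mul_assoc, antidiagJ_mul_self, Matrix.one_mul]
  rw [Matrix.mul_assoc, antidiagJ_mul_self, Matrix.mul_one]

theorem mem_soLie_iff {X : Matrix (Fin (2 * n + 1)) (Fin (2 * n + 1)) K} :
    X ∈ soLie K n ↔ soInvolution K n X = -X := by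
  rw [soLie, LinearMap.mem_ker, eq_neg_iff_add_eq_zero, add_comm (soInvolution K n X)]
  rfl

theorem soInvolution_conj {g : Matrix (Fin (2 * n + 1)) (Fin (2 * n + 1)) K}
    (hg : gᵀ = antidiagJ K n * g * antidiagJ K n)
    (X : Matrix (Fin (2 * n + 1)) (Fin (2 * n + 1)) K) :
    soInvolution K n (g * (X * g)) = g * (soInvolution K n X * g) := by
  simp only [soInvolution_apply, transpose_mul, hg, Matrix.mul_assoc]
  simp only [← Matrix.mul_assoc (antidiagJ K n) (antidiagJ K n), antidiagJ_mul_self,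
    Matrix.one_mul, Matrix.mul_one]

theorem conj_mem_soLie {g X : Matrix (Fin (2 * n + 1)) (Fin (2 * n + 1)) K}
    (hg : gᵀ = antidiagJ K n * g * antidiagJ K n) (hX : X ∈ soLie K n) :
    g * (X * g) ∈ soLie K n := by
  rw [mem_soLie_iff] at hX ⊢
  rw [soInvolution_conj hg, hX, Matrix.neg_mul, Matrix.mul_neg]

variable (K n) in
noncomputable def soProj :
    Matrix (Fin (2 * n + 1)) (Fin (2 * n + 1)) K →ₗ[K]
      Matrix (Fin (2 * n + 1)) (Fin (2 * n + 1)) K :=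
  (2⁻¹ : K) • (LinearMap.id - soInvolution K n)

theorem soProj_mem (X : Matrix (Fin (2 * n + 1)) (Fin (2 * n + 1)) K) :
    soProj K n X ∈ soLie K n := by
  rw [mem_soLie_iff, soProj, LinearMap.smul_apply, map_smul, LinearMap.sub_apply, map_sub,
    LinearMap.id_apply, soInvolution_soInvolution, ← smul_neg, neg_sub]

theorem soProj_of_mem (h2 : (2 : K) ≠ 0) {X : Matrix (Fin (2 * n + 1)) (Fin (2 * n + 1)) K}
    (hX : X ∈ soLie K n) : soProj K n X = X := by
  rw [mem_soLie_iff] at hX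
  rw [soProj, LinearMap.smul_apply, LinearMap.sub_apply, LinearMap.id_apply, hX, sub_neg_eq_add,
    ← two_smul K X, smul_smul, inv_mul_cancel₀ h2, one_smul]

theorem trace_conj_soLie (h2 : (2 : K) ≠ 0) {g : Matrix (Fin (2 * n + 1)) (Fin (2 * n + 1)) K}
    (hg : gᵀ = antidiagJ K n * g * antidiagJ K n) (Ad : soLie K n →ₗ[K] soLie K n)
    (hAd : ∀ A : soLie K n, (Ad A : Matrix (Fin (2 * n + 1)) (Fin (2 * n + 1)) K) = g * A * g) :
    LinearMap.trace K (soLie K n) Ad = 2⁻¹ * (g.trace ^ 2 - (g * g).trace) := by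
  set J := antidiagJ K n
  set L := LinearMap.mulLeft K g ∘ₗ LinearMap.mulRight K g
  have hmem (X) : (L ∘ₗ soProj K n) X ∈ soLie K n := conj_mem_soLie hg (soProj_mem X)
  have hAd_eq : Ad = (L ∘ₗ soProj K n).restrict fun X _ => hmem X := by
    ext A : 2
    simp [hAd, L, soProj_of_mem h2 A.2, Matrix.mul_assoc]
  have hLτ : L ∘ₗ soInvolution K n = LinearMap.mulLeft K (g * J) ∘ₗ
      LinearMap.mulRight K (J * g) ∘ₗ
        (transposeLinearEquiv (Fin (2 * n + 1)) (Fin (2 * n + 1)) K K).toLinearMap := by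
    ext X : 1
    simp [L, J, soInvolution_apply, Matrix.mul_assoc]
  have htrLτ : (g * J * (J * g)ᵀ).trace = (g * g).trace := by
    rw [transpose_mul, antidiagJ_transpose, hg]
    simp only [Matrix.mul_assoc]
    simp only [← Matrix.mul_assoc J J, J, antidiagJ_mul_self, Matrix.one_mul, Matrix.mul_one]
  rw [hAd_eq, LinearMap.trace_restrict_eq_of_forall_mem _ _ hmem, soProj, LinearMap.comp_smul,
    LinearMap.comp_sub, LinearMap.comp_id, map_smul, map_sub, hLτ,
    LinearMap.trace_mulLeft_comp_mulRight, LinearMap.trace_mulLeft_comp_mulRight_comp_transpose,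
    htrLτ, smul_eq_mul, sq]

end SoLie

theorem stmt1_general (K : Type*) [Field K] [CharZero K] (n : ℕ)
    (g : Matrix (Fin (2 * n + 1)) (Fin (2 * n + 1)) K)
    (hg2 : g * g = 1)
    (μ : K)
    (hGO : g.transpose * antidiagJ K n * g = μ • antidiagJ K n)
    (htr : Matrix.trace g = 1 ∨ Matrix.trace g = -1)
    (Ad : soLie K n →ₗ[K] soLie K n)
    (hAd : ∀ A : soLie K n,
      (↑(Ad A) : Matrix (Fin (2 * n + 1)) (Fin (2 * n + 1)) K) =
        g * (↑A : Matrix (Fin (2 * n + 1)) (Fin (2 * n + 1)) K) * g) :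
    LinearMap.trace K ↥(soLie K n) Ad = -(n : K) := by
  have htr_sq : g.trace ^ 2 = 1 := by rcases htr with h | h <;> simp [h]
  have hgt : gᵀ = antidiagJ K n * g * antidiagJ K n :=
    transpose_eq_conj_of_similitude hg2 antidiagJ_mul_self hGO
      fun h => by simp [h] at htr_sq
  rw [trace_conj_soLie two_ne_zero hgt Ad hAd, htr_sq, hg2, trace_one, Fintype.card_fin]
  push_cast
  ring

/-- Let `ρ♭ : Gal(ℂ/ℝ) → GO_{2n+1}(Q̄_ℓ)` be a (continuous) homomorphism and
`ρ♯` its composition with the standard embedding `GO_{2n+1} ⊂ GL_{2n+1}`.  Here `g = ρ♭(c)`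
is the image of complex conjugation, so `g² = 1` and `gᵀ J g = μ J` for some similitude
factor `μ ≠ 0`.  If `Tr ρ♯(c) = ±1` then `ρ♭` is odd: the trace of `Ad(ρ♭(c)) = (A ↦ g A g⁻¹)`
on the Lie algebra `so_{2n+1}` equals `−n = −rank(so_{2n+1})`.  (Since `g² = 1` we have
`g⁻¹ = g`, so `Ad(g) A = g A g`.) -/
theorem stmt1 (K : Type*) [Field K] [IsAlgClosed K] [CharZero K] (n : ℕ)
    (g : Matrix (Fin (2 * n + 1)) (Fin (2 * n + 1)) K)
    (hg2 : g * g = 1)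
    (μ : K) (hμ : μ ≠ 0)
    (hGO : g.transpose * antidiagJ K n * g = μ • antidiagJ K n)
    (htr : Matrix.trace g = 1 ∨ Matrix.trace g = -1)
    (Ad : soLie K n →ₗ[K] soLie K n)
    (hAd : ∀ A : soLie K n,
      (↑(Ad A) : Matrix (Fin (2 * n + 1)) (Fin (2 * n + 1)) K) =
        g * (↑A : Matrix (Fin (2 * n + 1)) (Fin (2 * n + 1)) K) * g) :
    LinearMap.trace K ↥(soLie K n) Ad = -(n : K) :=
  stmt1_general K n g hg2 μ hGO htr Ad hAd
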